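/- arXiv:1609.08400 — 2 statements merged into one kernel-verified Lean document; each statement's English description precedes it below -/
import Mathlib

section
/- Let I be the cochain complex L₀ ⊕ L₁[-1] ⊕ L₁[-1] ⊕ L₁[-2] with differential d(x₀,x₁,x₂,x₃) = (dx₀, f x₀ - dx₁, r x₀ - dx₂, T x₀ - q x₁ + x₂ + dx₃), where [d,T] = qf - r. Let A be a cochain complex with a chain map k : A → L₀ and degree -1 maps Q, R : A → L₁ satisfying [d,Q] = f∘k and [d,R] = 0. Then the map η : A → I defined by η(x) = (k x, Q x - R x, -T k x + q Q x - q R x, 0) is a chain map. -/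
/-- The differential of the complex `I = L₀ ⊕ L₁[-1] ⊕ L₁[-1] ⊕ L₁[-2]`, with
`d(x₀,x₁,x₂,x₃) = (dx₀, f x₀ - dx₁, r x₀ - dx₂, T x₀ - q x₁ + x₂ + dx₃)`; the
piece of `I` at index `n` is `I^{n+2} = L₀^{n+2} × L₁^{n+1} × L₁^{n+1} × L₁^{n}`. -/
def IDiff {L₀ L₁ : ℤ → Type} [∀ n, AddCommGroup (L₀ n)] [∀ n, AddCommGroup (L₁ n)]
    (d₀ : ∀ n : ℤ, L₀ n →+ L₀ (n+1)) (d₁ : ∀ n : ℤ, L₁ n →+ L₁ (n+1))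
    (f : ∀ n : ℤ, L₀ n →+ L₁ n) (q : ∀ n : ℤ, L₁ n →+ L₁ n)
    (r : ∀ n : ℤ, L₀ n →+ L₁ n) (T : ∀ n : ℤ, L₀ (n+1) →+ L₁ n) (n : ℤ) :
    (L₀ (n+1+1) × L₁ (n+1) × L₁ (n+1) × L₁ n) →+
      (L₀ (n+1+1+1) × L₁ (n+1+1) × L₁ (n+1+1) × L₁ (n+1)) :=
  AddMonoidHom.mk' (fun x =>
    (d₀ (n+1+1) x.1,
     f (n+1+1) x.1 - d₁ (n+1) x.2.1,
     r (n+1+1) x.1 - d₁ (n+1) x.2.2.1,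
     T (n+1) x.1 - q (n+1) x.2.1 + x.2.2.1 + d₁ n x.2.2.2)) (by
    intro a b
    ext <;> simp [map_add] <;> abel)

/-- The map `η : A → I`, `η(x) = (k x, Q x - R x, -T k x + q Q x - q R x, 0)`. -/
def etaMap {A L₀ L₁ : ℤ → Type} [∀ n, AddCommGroup (A n)]
    [∀ n, AddCommGroup (L₀ n)] [∀ n, AddCommGroup (L₁ n)]
    (q : ∀ n : ℤ, L₁ n →+ L₁ n) (T : ∀ n : ℤ, L₀ (n+1) →+ L₁ n)
    (k : ∀ n : ℤ, A n →+ L₀ n) (Q R : ∀ n : ℤ, A (n+1) →+ L₁ n) (n : ℤ) :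
    A (n+1+1) →+ (L₀ (n+1+1) × L₁ (n+1) × L₁ (n+1) × L₁ n) :=
  AddMonoidHom.mk' (fun x =>
    (k (n+1+1) x,
     Q (n+1) x - R (n+1) x,
     -T (n+1) (k (n+1+1) x) + q (n+1) (Q (n+1) x) - q (n+1) (R (n+1) x),
     0)) (by
    intro a b
    ext <;> simp [map_add] <;> abel)

/-- With `I` as above (where `dT + Td = qf - r`, and `f`, `q` are
chain maps), let `A` be a cochain complex with a chain map `k : A → L₀` and
degree `-1` maps `Q, R : A → L₁` satisfying `[d,Q] = f∘k` and `[d,R] = 0`.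
Then `η : A → I`, `η(x) = (k x, Q x - R x, -T k x + q Q x - q R x, 0)`,
is a chain map. -/
theorem etaMap_chain_map
    {A L₀ L₁ : ℤ → Type} [∀ n, AddCommGroup (A n)]
    [∀ n, AddCommGroup (L₀ n)] [∀ n, AddCommGroup (L₁ n)]
    (dA : ∀ n : ℤ, A n →+ A (n+1))
    (d₀ : ∀ n : ℤ, L₀ n →+ L₀ (n+1)) (d₁ : ∀ n : ℤ, L₁ n →+ L₁ (n+1))
    (f : ∀ n : ℤ, L₀ n →+ L₁ n) (q : ∀ n : ℤ, L₁ n →+ L₁ n)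
    (r : ∀ n : ℤ, L₀ n →+ L₁ n) (T : ∀ n : ℤ, L₀ (n+1) →+ L₁ n)
    (hA : ∀ (n : ℤ) (x : A n), dA (n+1) (dA n x) = 0)
    (h₀ : ∀ (n : ℤ) (x : L₀ n), d₀ (n+1) (d₀ n x) = 0)
    (h₁ : ∀ (n : ℤ) (x : L₁ n), d₁ (n+1) (d₁ n x) = 0)
    (hf : ∀ (n : ℤ) (x : L₀ n), f (n+1) (d₀ n x) = d₁ n (f n x))
    (hq : ∀ (n : ℤ) (x : L₁ n), q (n+1) (d₁ n x) = d₁ n (q n x))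
    (hT : ∀ (n : ℤ) (x : L₀ (n+1)),
        d₁ n (T n x) + T (n+1) (d₀ (n+1) x) = q (n+1) (f (n+1) x) - r (n+1) x)
    (k : ∀ n : ℤ, A n →+ L₀ n)
    (hk : ∀ (n : ℤ) (x : A n), k (n+1) (dA n x) = d₀ n (k n x))
    (Q R : ∀ n : ℤ, A (n+1) →+ L₁ n)
    (hQ : ∀ (n : ℤ) (x : A (n+1)),
        d₁ n (Q n x) + Q (n+1) (dA (n+1) x) = f (n+1) (k (n+1) x))
    (hR : ∀ (n : ℤ) (x : A (n+1)),
        d₁ n (R n x) + R (n+1) (dA (n+1) x) = 0) :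
    ∀ (n : ℤ) (x : A (n+1+1)),
      IDiff d₀ d₁ f q r T n (etaMap q T k Q R n x) =
        etaMap q T k Q R (n+1) (dA (n+1+1) x) := by
  intro n x
  simp only [IDiff, etaMap, AddMonoidHom.mk'_apply, Prod.mk.injEq]
  have hQ' : ∀ (m : ℤ) (y : A (m+1)), Q (m+1) (dA (m+1) y) = f (m+1) (k (m+1) y) - d₁ m (Q m y) := by
    intro m y; rw [← hQ m y]; abel
  have hR' : ∀ (m : ℤ) (y : A (m+1)), R (m+1) (dA (m+1) y) = - d₁ m (R m y) := by
    intro m y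
    have := hR m y
    rw [eq_neg_iff_add_eq_zero]
    exact (add_comm _ _).trans this
  refine ⟨(hk _ x).symm, ?_, ?_, ?_⟩
  · rw [hQ' (n+1) x, hR' (n+1) x]
    simp only [map_sub]
    abel
  · have h1 := hT (n+1) (k (n+1+1) x)
    have h1' : T (n+1+1) (d₀ (n+1+1) (k (n+1+1) x)) =
        q (n+1+1) (f (n+1+1) (k (n+1+1) x)) - r (n+1+1) (k (n+1+1) x) - d₁ (n+1) (T (n+1) (k (n+1+1) x)) := by
      rw [← h1]; abel
    rw [hk, hQ' (n+1) x, hR' (n+1) x, h1']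
    simp only [map_add, map_sub, map_neg, ← hq]
    abel
  · simp only [map_sub, map_zero]
    abel
end

section
/- Let η : ker f → I, η(x₀,x₁) = (x₀, x₁, -T x₀ + q x₁, 0), and let π : I → ker f be the projection π(x₀,x₁,x₂,x₃) = (x₀,x₁). Then π is a chain map, π∘η = id on ker f, and the degree -1 map N : I → I given by N(x₀,x₁,x₂,x₃) = (0,0,x₃,0) satisfies dN + Nd = id_I - η∘π. Hence η is a chain homotopy equivalence. -/
set_option linter.unnecessarySeqFocus false

/-- Differential of `ker f = L₀ ⊕ L₁[-1]`; piece at index `n` is `L₀^{n+1} × L₁^{n}`. -/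
def kerD {L₀ L₁ : ℤ → Type} [∀ n, AddCommGroup (L₀ n)] [∀ n, AddCommGroup (L₁ n)]
    (d₀ : ∀ n : ℤ, L₀ n →+ L₀ (n+1)) (d₁ : ∀ n : ℤ, L₁ n →+ L₁ (n+1))
    (f : ∀ n : ℤ, L₀ n →+ L₁ n) (n : ℤ) :
    (L₀ (n+1) × L₁ n) →+ (L₀ (n+1+1) × L₁ (n+1)) :=
  AddMonoidHom.mk' (fun x => (d₀ (n+1) x.1, f (n+1) x.1 - d₁ n x.2)) (by
    intro a b
    ext <;> simp [map_add] <;> abel)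

/-- `η : ker f → I`, `η(x₀,x₁) = (x₀, x₁, -T x₀ + q x₁, 0)`. -/
def etaKer {L₀ L₁ : ℤ → Type} [∀ n, AddCommGroup (L₀ n)] [∀ n, AddCommGroup (L₁ n)]
    (q : ∀ n : ℤ, L₁ n →+ L₁ n) (T : ∀ n : ℤ, L₀ (n+1) →+ L₁ n) (n : ℤ) :
    (L₀ (n+1+1) × L₁ (n+1)) →+ (L₀ (n+1+1) × L₁ (n+1) × L₁ (n+1) × L₁ n) :=
  AddMonoidHom.mk' (fun x =>
    (x.1, x.2, -T (n+1) x.1 + q (n+1) x.2, 0)) (by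
    intro a b
    ext <;> simp [map_add] <;> abel)

/-- The projection `π : I → ker f`, `π(x₀,x₁,x₂,x₃) = (x₀,x₁)`. -/
def piMap {L₀ L₁ : ℤ → Type} [∀ n, AddCommGroup (L₀ n)] [∀ n, AddCommGroup (L₁ n)]
    (n : ℤ) :
    (L₀ (n+1+1) × L₁ (n+1) × L₁ (n+1) × L₁ n) →+ (L₀ (n+1+1) × L₁ (n+1)) :=
  AddMonoidHom.mk' (fun x => (x.1, x.2.1)) (by intro a b; ext <;> simp)

/-- The degree `-1` map `N : I → I`, `N(x₀,x₁,x₂,x₃) = (0,0,x₃,0)`. -/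
def NMap {L₀ L₁ : ℤ → Type} [∀ n, AddCommGroup (L₀ n)] [∀ n, AddCommGroup (L₁ n)]
    (n : ℤ) :
    (L₀ (n+1+1+1) × L₁ (n+1+1) × L₁ (n+1+1) × L₁ (n+1)) →+
      (L₀ (n+1+1) × L₁ (n+1) × L₁ (n+1) × L₁ n) :=
  AddMonoidHom.mk' (fun x => (0, 0, x.2.2.2, 0)) (by intro a b; ext <;> simp)

/-- With `η(x₀,x₁) = (x₀,x₁,-T x₀ + q x₁,0)` and
`π(x₀,x₁,x₂,x₃) = (x₀,x₁)`: `π` is a chain map, `π ∘ η = id` on `ker f`, and the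
degree `-1` map `N(x₀,x₁,x₂,x₃) = (0,0,x₃,0)` satisfies
`dN + Nd = id_I - η∘π`.  Hence `η` is a chain homotopy equivalence. -/
theorem piMap_etaKer_homotopy_equiv
    {L₀ L₁ : ℤ → Type} [∀ n, AddCommGroup (L₀ n)] [∀ n, AddCommGroup (L₁ n)]
    (d₀ : ∀ n : ℤ, L₀ n →+ L₀ (n+1)) (d₁ : ∀ n : ℤ, L₁ n →+ L₁ (n+1))
    (f : ∀ n : ℤ, L₀ n →+ L₁ n) (q : ∀ n : ℤ, L₁ n →+ L₁ n)
    (r : ∀ n : ℤ, L₀ n →+ L₁ n) (T : ∀ n : ℤ, L₀ (n+1) →+ L₁ n)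
    (h₀ : ∀ (n : ℤ) (x : L₀ n), d₀ (n+1) (d₀ n x) = 0)
    (h₁ : ∀ (n : ℤ) (x : L₁ n), d₁ (n+1) (d₁ n x) = 0)
    (hf : ∀ (n : ℤ) (x : L₀ n), f (n+1) (d₀ n x) = d₁ n (f n x))
    (hq : ∀ (n : ℤ) (x : L₁ n), q (n+1) (d₁ n x) = d₁ n (q n x))
    (hT : ∀ (n : ℤ) (x : L₀ (n+1)),
        d₁ n (T n x) + T (n+1) (d₀ (n+1) x) = q (n+1) (f (n+1) x) - r (n+1) x) :
    -- `π` is a chain map: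
    (∀ (n : ℤ) (x : L₀ (n+1+1) × L₁ (n+1) × L₁ (n+1) × L₁ n),
        kerD d₀ d₁ f (n+1) (piMap n x) = piMap (n+1) (IDiff d₀ d₁ f q r T n x)) ∧
    -- `π ∘ η = id` on `ker f`:
    (∀ (n : ℤ) (z : L₀ (n+1+1) × L₁ (n+1)), piMap n (etaKer q T n z) = z) ∧
    -- `dN + Nd = id_I - η∘π`:
    (∀ (n : ℤ) (x : L₀ (n+1+1+1) × L₁ (n+1+1) × L₁ (n+1+1) × L₁ (n+1)),
        IDiff d₀ d₁ f q r T n (NMap n x) + NMap (n+1) (IDiff d₀ d₁ f q r T (n+1) x)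
          = x - etaKer q T (n+1) (piMap (n+1) x)) := by
  refine ⟨fun n x => ?_, fun n z => rfl, fun n x => ?_⟩
  · ext <;> simp [kerD, piMap, IDiff]
  · ext <;> simp [NMap, IDiff, etaKer, piMap] <;> abel
end
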